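/- For every n ∈ ℤ, the odd type-I* Bernstein operator satisfies the operator identity C_n^{(1)} = ∂_{ẽ₀}^⊥ ∘ C_n^{(0)} = Σ_{r,s,t≥0} (−1)^r h_{n+r−t} ∘ θ_{s+t+1} ∘ h_s^⊥ ∘ e_r^⊥ on the ring of symmetric functions in superspace (with h_j = 0 for j < 0). -/

import Mathlib

/-!
Common setup: the ring of symmetric functions in superspace
`𝒜 = ℚ[x₁,x₂,…] ⊗ ⋀[θ₁,θ₂,…]`, axiomatised as a structure `SSF` on a
ℚ-algebra `A`, together with superpartitions and the various derived
operators (Bernstein operators in superspace of the four types, etc.).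

Conventions:
* `x k`, `θ k` are the (normalized) power sums; they are meaningful for
  `k ≥ 1` and we set `x 0 = θ 0 = 0`.
* All "locally finite" infinite sums of operators `∑_{r ≥ 0}` are rendered
  as finite sums `∑ r ∈ Finset.range (bnd f)` where `bnd f` is a bound
  beyond which all relevant operators annihilate `f`.
-/

open scoped BigOperators Classical

noncomputable section

/-- A superpartition `Λ = (Λᵃ; Λˢ)`: `Λᵃ` is a strictly decreasing list of
nonnegative integers (the fermionic parts) and `Λˢ` is a weakly decreasing
list of positive integers (the bosonic parts). -/
structure SuperPartition where
  a : List ℕ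
  s : List ℕ
  ha : a.Chain' (· > ·)
  hs : s.Chain' (· ≥ ·)
  hs0 : ∀ p ∈ s, 0 < p

namespace SuperPartition

/-- the fermionic degree `m(Λ)` -/
def fdeg (Λ : SuperPartition) : ℕ := Λ.a.length

/-- the number of parts `N` -/
def len (Λ : SuperPartition) : ℕ := Λ.a.length + Λ.s.length

/-- the total degree `|Λ|` -/
def deg (Λ : SuperPartition) : ℕ := Λ.a.sum + Λ.s.sum

/-- `Λ*`: the weakly decreasing rearrangement of all the parts -/
def star (Λ : SuperPartition) : List ℕ :=
  (Multiset.sort ((Λ.a ++ Λ.s : List ℕ) : Multiset ℕ) (· ≤ ·)).reverse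

/-- `Λ⊛`: the weakly decreasing rearrangement of the parts of `Λˢ`
together with the parts of `Λᵃ` each increased by one -/
def circ (Λ : SuperPartition) : List ℕ :=
  (Multiset.sort ((Λ.a.map (· + 1) ++ Λ.s : List ℕ) : Multiset ℕ) (· ≤ ·)).reverse

/-- `Λᵢ*` (0-indexed; equal to `0` beyond the length) -/
def starPart (Λ : SuperPartition) (i : ℕ) : ℕ := Λ.star.getD i 0

/-- `Λᵢ⊛` (0-indexed; equal to `0` beyond the length) -/
def circPart (Λ : SuperPartition) (i : ℕ) : ℕ := Λ.circ.getD i 0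

/-- `εᵢ(Λ) = Λᵢ⊛ − Λᵢ*` (0-indexed) -/
def eps (Λ : SuperPartition) (i : ℕ) : ℕ := Λ.circPart i - Λ.starPart i

/-- the (0-indexed) rows of the diagram of `Λ` that end with a circle,
listed from top to bottom -/
def circleRows (Λ : SuperPartition) : List ℕ :=
  (List.range Λ.len).filter (fun i => decide (Λ.circPart i = Λ.starPart i + 1))

end SuperPartition

/-- the `i`-th part (0-indexed) of the conjugate of the partition `L` -/
def conjPart (L : List ℕ) (i : ℕ) : ℕ := (L.filter (fun p => decide (i < p))).length

/-- `Λc` is the conjugate `Λ'` of the superpartition `Λ` (the diagram of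
`Λc` is the transpose of the diagram of `Λ`, i.e. both `Λ*` and `Λ⊛` get
conjugated). -/
def SuperPartition.IsConj (Λ Λc : SuperPartition) : Prop :=
  (∀ i, Λc.starPart i = conjPart Λ.star i) ∧ (∀ i, Λc.circPart i = conjPart Λ.circ i)

/-- The ring `𝒜 = ℚ[x₁,x₂,…] ⊗ ⋀[θ₁,θ₂,…]` of symmetric functions in
superspace, together with its standard structure:  power sums `x`, `θ`,
the elementary and homogeneous bases `e`, `ẽ`, `h`, `h̃` (defined through
their generating series, here encoded by the equivalent recurrences
obtained by comparing coefficients), the derivatives `∂_{x_k}`, `∂_{θ_k}`,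
`∂_{ẽ_m}`, the adjoint (`⊥`) map, the scalar product, the automorphisms
`ω` and `ρ` (and the adjoints `ρ^⊥`, `φ^⊥` of `ρ` and `φ = ω ∘ ρ`), and
the four families of Schur functions in superspace. -/
structure SSF (A : Type*) [Ring A] [Algebra ℚ A] where
  /-- the even power sums `x_k = p_k/k` (for `k ≥ 1`) -/
  x : ℕ → A
  /-- the odd power sums `θ_k` (for `k ≥ 1`) -/
  θ : ℕ → A
  x0 : x 0 = 0
  θ0 : θ 0 = 0
  x_central : ∀ k a, x k * a = a * x k
  θ_anticomm : ∀ j k, θ j * θ k = - (θ k * θ j)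
  /-- `A` is free over `ℚ` with basis the supermonomials in the `x`'s and `θ`'s -/
  bas : Module.Basis ((ℕ →₀ ℕ) × Finset ℕ) ℚ A
  bas_eq : ∀ (d : ℕ →₀ ℕ) (T : Finset ℕ), bas (d, T) =
    ((d.support.sort (· ≤ ·)).map (fun k => x (k+1) ^ d k)).prod *
      ((T.sort (· ≤ ·)).map (fun k => θ (k+1))).prod
  /-- the complete homogeneous functions `h_k`, defined by
  `∑ z^k h_k = exp (∑_{k>0} z^k x_k)` -/
  h : ℕ → A
  /-- the elementary functions `e_k`, defined by
  `∑ z^k e_k = exp (−∑_{k>0} (−z)^k x_k)` -/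
  e : ℕ → A
  /-- the odd complete homogeneous functions `h̃_k` -/
  ht : ℕ → A
  /-- the odd elementary functions `ẽ_k` -/
  et : ℕ → A
  h_zero : h 0 = 1
  h_rec : ∀ n : ℕ, ((n : ℚ) + 1) • h (n+1) =
    ∑ k ∈ Finset.range (n+1), ((k : ℚ) + 1) • (x (k+1) * h (n - k))
  e_zero : e 0 = 1
  e_rec : ∀ n : ℕ, ((n : ℚ) + 1) • e (n+1) =
    ∑ k ∈ Finset.range (n+1), (((-1 : ℚ))^k * ((k : ℚ) + 1)) • (x (k+1) * e (n - k))
  ht_eq : ∀ n : ℕ, ht n = ∑ j ∈ Finset.range (n+1), θ (j+1) * h (n - j)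
  et_eq : ∀ n : ℕ, et n = ∑ j ∈ Finset.range (n+1), ((-1 : ℚ))^j • (θ (j+1) * e (n - j))
  /-- the parity (grading) involution, `σ(x_k) = x_k`, `σ(θ_k) = −θ_k` -/
  σ : A →ₐ[ℚ] A
  σ_x : ∀ k, σ (x k) = x k
  σ_θ : ∀ k, σ (θ k) = - θ k
  /-- the derivative `∂_{x_k}` -/
  Dx : ℕ → Module.End ℚ A
  /-- the (odd) derivative `∂_{θ_k}` -/
  Dθ : ℕ → Module.End ℚ A
  Dx_leibniz : ∀ k a b, Dx k (a * b) = Dx k a * b + a * Dx k b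
  Dθ_leibniz : ∀ k a b, Dθ k (a * b) = Dθ k a * b + σ a * Dθ k b
  Dx_x : ∀ k j, 1 ≤ k → Dx k (x j) = if j = k then 1 else 0
  Dx_θ : ∀ k j, Dx k (θ j) = 0
  Dθ_x : ∀ k j, Dθ k (x j) = 0
  Dθ_θ : ∀ k j, 1 ≤ k → Dθ k (θ j) = if j = k then 1 else 0
  /-- the (odd) derivative `∂_{ẽ_m}` with respect to `ẽ_m` in the free
  presentation `𝒜 = ℚ[e₁,e₂,…] ⊗ ⋀[ẽ₀,ẽ₁,…]` -/
  De : ℕ → Module.End ℚ A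
  De_leibniz : ∀ m a b, De m (a * b) = De m a * b + σ a * De m b
  De_e : ∀ m n, De m (e n) = 0
  De_et : ∀ m n, De m (et n) = if n = m then 1 else 0
  /-- the adjoint map `f ↦ f^⊥`, given by the substitutions
  `x_k ↦ (1/k) ∂_{x_k}` and `θ_k ↦ ∂_{θ_k}` (it is linear and reverses
  products) -/
  perp : A →ₗ[ℚ] Module.End ℚ A
  perp_one : perp 1 = 1
  perp_mul : ∀ a b, perp (a * b) = perp b * perp a
  perp_x : ∀ k, 1 ≤ k → perp (x k) = ((k : ℚ))⁻¹ • Dx k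
  perp_θ : ∀ k, 1 ≤ k → perp (θ k) = Dθ k
  /-- the scalar product `⟨·,·⟩` on `𝒜`; on the power-sum basis it is
  `⟨𝒳_Λ, 𝒳_Ω⟩ = δ_{ΛΩ} (−1)^{m(m−1)/2} |Aut(Λˢ)| / ∏ᵢ Λˢᵢ`, which on the
  (increasingly sorted) supermonomial basis takes the diagonal form below -/
  ip : A →ₗ[ℚ] A →ₗ[ℚ] ℚ
  ip_bas : ∀ (d : ℕ →₀ ℕ) (T : Finset ℕ) (d' : ℕ →₀ ℕ) (T' : Finset ℕ),
    ip (bas (d, T)) (bas (d', T')) =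
      if d = d' ∧ T = T' then d.prod (fun k n => (Nat.factorial n : ℚ) / ((k : ℚ) + 1)^n)
      else 0
  /-- `⟨f·a, b⟩ = ⟨a, f^⊥ b⟩` : `perp f` is the adjoint of multiplication by `f` -/
  perp_adj : ∀ f a b, ip (f * a) b = ip a (perp f b)
  /-- a uniform truncation bound: beyond `bnd f`, the annihilation operators
  kill `f` -/
  bnd : A → ℕ
  bnd_Dθ : ∀ f k, bnd f ≤ k → Dθ k f = 0
  bnd_Dx : ∀ f k, bnd f ≤ k → Dx k f = 0
  bnd_eperp : ∀ f k, bnd f ≤ k → perp (e k) f = 0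
  bnd_hperp : ∀ f k, bnd f ≤ k → perp (h k) f = 0
  bnd_etperp : ∀ f k, bnd f ≤ k → perp (et k) f = 0
  bnd_htperp : ∀ f k, bnd f ≤ k → perp (ht k) f = 0
  /-- the automorphism `ω` -/
  ω : A →ₐ[ℚ] A
  ω_x : ∀ n, 1 ≤ n → ω (x n) = ((-1 : ℚ))^(n-1) • x n
  ω_θ : ∀ n, 1 ≤ n → ω (θ n) = ((-1 : ℚ))^(n-1) • θ n
  ω_invol : ∀ a, ω (ω a) = a
  /-- the automorphism `ρ` -/
  ρ : A →ₐ[ℚ] A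
  ρ_x : ∀ n, 1 ≤ n → ρ (x n) = ((-1 : ℚ))^(n-1) • x n
  ρ_θ : ∀ n, 1 ≤ n → ρ (θ n) = et (n-1)
  ρ_invol : ∀ a, ρ (ρ a) = a
  /-- `ρ^⊥`, the adjoint of `ρ` with respect to the scalar product -/
  ρperp : A →ₗ[ℚ] A
  ρperp_adj : ∀ a b, ip (ρ a) b = ip a (ρperp b)
  /-- `φ^⊥`, the adjoint of `φ = ω ∘ ρ` with respect to the scalar product -/
  φperp : A →ₗ[ℚ] A
  φperp_adj : ∀ a b, ip (ω (ρ a)) b = ip a (φperp b)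
  /-- `(φ^⊥)⁻¹`, the inverse of `φ^⊥` -/
  φperpInv : A →ₗ[ℚ] A
  φperpInv_left : ∀ a, φperpInv (φperp a) = a
  φperpInv_right : ∀ a, φperp (φperpInv a) = a
  /-- the type I Schur functions in superspace `s_Λ = P_Λ(q=0, t=0)` -/
  sI : SuperPartition → A
  /-- the type I* Schur functions in superspace `s*_Λ` (dual basis of the `s_Λ`) -/
  sIstar : SuperPartition → A
  /-- the type II Schur functions in superspace `s̄_Λ = P_Λ(q=∞, t=∞)` -/
  sII : SuperPartition → A
  /-- the type II* Schur functions in superspace `s̄*_Λ` (dual basis of the `s̄_Λ`) -/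
  sIIstar : SuperPartition → A
  sI_dual : ∀ Λ Ω, ip (sI Λ) (sIstar Ω) = if Λ = Ω then 1 else 0
  sII_dual : ∀ Λ Ω, ip (sII Λ) (sIIstar Ω) = if Λ = Ω then 1 else 0

/-- the modes of `exp (∑_{n>0} w^n a_n)` where `n • a_n = T n`:
`expModes T s` is the coefficient of `w^s`. -/
noncomputable def expModes {A : Type*} [Ring A] [Algebra ℚ A] (T : ℕ → A → A) : ℕ → A → A
  | 0 => fun f => f
  | n + 1 => fun f =>
      ((n : ℚ) + 1)⁻¹ • ∑ k ∈ Finset.range (n + 1), T (k + 1) (expModes T (n - k) f)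
decreasing_by exact Nat.lt_succ_of_le (Nat.sub_le n k)

namespace SSF

variable {A : Type*} [Ring A] [Algebra ℚ A] (S : SSF A)

/-- `h_n` for `n ∈ ℤ` (with `h_n = 0` for `n < 0`) -/
def hZ (n : ℤ) : A := if 0 ≤ n then S.h n.toNat else 0

/-- `e_n` for `n ∈ ℤ` (with `e_n = 0` for `n < 0`) -/
def eZ (n : ℤ) : A := if 0 ≤ n then S.e n.toNat else 0

/-- `h̃_n` for `n ∈ ℤ` (with `h̃_n = 0` for `n < 0`) -/
def htZ (n : ℤ) : A := if 0 ≤ n then S.ht n.toNat else 0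

/-- `ẽ_n` for `n ∈ ℤ` (with `ẽ_n = 0` for `n < 0`) -/
def etZ (n : ℤ) : A := if 0 ≤ n then S.et n.toNat else 0

/-- `θ_n` for `n ∈ ℤ` (with `θ_n = 0` for `n ≤ 0`) -/
def θZ (n : ℤ) : A := if 1 ≤ n then S.θ n.toNat else 0

/-- `e_r^⊥` -/
def ePerp (r : ℕ) : A → A := fun f => S.perp (S.e r) f

/-- `h_r^⊥` -/
def hPerp (r : ℕ) : A → A := fun f => S.perp (S.h r) f

/-- `ẽ_r^⊥` -/
def etPerp (r : ℕ) : A → A := fun f => S.perp (S.et r) f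

/-- `∂_{ẽ_m} = (−1)^m ∑_{s≥0} h_s ∂_{θ_{m+s+1}}` (explicit locally finite form) -/
def de (m : ℕ) (f : A) : A :=
  ((-1 : ℚ))^m • ∑ s ∈ Finset.range (S.bnd f), S.h s * S.Dθ (m+s+1) f

/-- `∂_{ẽ_m}^⊥ = (−1)^m ∑_{s≥0} θ_{m+s+1} ∘ h_s^⊥` -/
def deperp (m : ℕ) (f : A) : A :=
  ((-1 : ℚ))^m • ∑ s ∈ Finset.range (S.bnd f), S.θ (m+s+1) * S.perp (S.h s) f

/-- `β_n = ∑_{r>0} θ_{r+n} ∂_{θ_r}` (for `n > 0`) -/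
def βp (n : ℕ) (f : A) : A :=
  ∑ r ∈ Finset.range (S.bnd f), S.θ (r+1+n) * S.Dθ (r+1) f

/-- `β_{−n} = ∑_{r>0} θ_r ∂_{θ_{r+n}}` (for `n > 0`) -/
def βm (n : ℕ) (f : A) : A :=
  ∑ r ∈ Finset.range (S.bnd f), S.θ (r+1) * S.Dθ (r+1+n) f

/-- the modes of `V₊(z) = exp(−∑_{n>0} (zⁿ/n) β_n)`:  `Vp s` is the
coefficient of `z^s` -/
def Vp : ℕ → A → A := expModes (fun k f => - S.βp k f)

/-- the modes of `V₊(z)⁻¹` -/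
def VpInv : ℕ → A → A := expModes (fun k f => S.βp k f)

/-- the modes of `V₋(z) = exp(−∑_{n>0} (z⁻ⁿ/(−n)) β_{−n})`:  `Vm s` is the
coefficient of `z^{−s}` -/
def Vm : ℕ → A → A := expModes (fun k f => S.βm k f)

/-- the modes of `V₋(z)⁻¹` -/
def VmInv : ℕ → A → A := expModes (fun k f => - S.βm k f)

/-- the odd type I Bernstein operator in superspace
`B_n^{(1)} = ∑_{r≥0} (−1)^r θ_{n+r+1} ∘ e_r^⊥` -/
def B1 (n : ℤ) (f : A) : A :=
  ∑ r ∈ Finset.range (S.bnd f), ((-1 : ℚ))^r • (S.θZ (n + (r : ℤ) + 1) * S.ePerp r f)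

/-- the even type I Bernstein operator in superspace `B_n^{(0)} = ∂_{ẽ₀} ∘ B_n^{(1)}` -/
def B0 (n : ℤ) (f : A) : A := S.de 0 (S.B1 n f)

/-- `B_n^{(ε)}` -/
def Bmode (n : ℤ) (ε : ℕ) (f : A) : A := if ε = 0 then S.B0 n f else S.B1 n f

/-- the even type I* Bernstein operator in superspace
`C_n^{(0)} = ∑_{r≥0} (−1)^r h_{n+r} ∘ e_r^⊥` -/
def C0 (n : ℤ) (f : A) : A :=
  ∑ r ∈ Finset.range (S.bnd f), ((-1 : ℚ))^r • (S.hZ (n + (r : ℤ)) * S.ePerp r f)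

/-- the odd type I* Bernstein operator in superspace `C_n^{(1)} = ∂_{ẽ₀}^⊥ ∘ C_n^{(0)}` -/
def C1 (n : ℤ) (f : A) : A := S.deperp 0 (S.C0 n f)

/-- `C_n^{(ε)}` -/
def Cmode (n : ℤ) (ε : ℕ) (f : A) : A := if ε = 0 then S.C0 n f else S.C1 n f

/-- the type II Bernstein operators `B̄_n^{(ε)}`: the modes of
`B̄(z;η) = V₊(z) H(z;η) E^⊥(−z⁻¹) = ∑_{n,ε} z^n η^ε B̄_n^{(ε)}` -/
def Bbar (n : ℤ) (ε : ℕ) (f : A) : A :=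
  ∑ r ∈ Finset.range (S.bnd f),
    ((-1 : ℚ))^r •
      ∑ s ∈ Finset.range ((n + (r : ℤ)).toNat + 1),
        S.Vp s
          ((if ε = 0 then S.hZ (n + (r : ℤ) - (s : ℤ)) else S.htZ (n + (r : ℤ) - (s : ℤ))) *
            S.ePerp r f)

/-- the modes `K_n^{(ε)}` of
`K(z;η) = V₊(z)⁻¹ H(z) (∑_{r≥0} z^{−r} ∂_{θ_{r+1}}) exp(−η θ₁) E^⊥(−z⁻¹)
        = ∑_{n ∈ ℤ} z^n (η K_n^{(0)} + K_n^{(1)})` -/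
def Kmode (n : ℤ) (ε : ℕ) (f : A) : A :=
  ∑ j ∈ Finset.range (S.bnd f),
    ((-1 : ℚ))^j •
      (let g : A := if ε = 0 then S.θ 1 * S.ePerp j f else S.ePerp j f
       ∑ r ∈ Finset.range (S.bnd g),
         ∑ u ∈ Finset.range ((n + (r : ℤ) + (j : ℤ)).toNat + 1),
           S.VpInv u (S.hZ (n + (r : ℤ) + (j : ℤ) - (u : ℤ)) * S.Dθ (r+1) g))

end SSF

/-- `SSF` together with the truncation bounds for the (degree-lowering)
modes of `V₋(z)` and `V₋(z)⁻¹`. -/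
structure SSFX (A : Type*) [Ring A] [Algebra ℚ A] extends SSF A where
  bnd_Vm : ∀ (f : A) (u : ℕ), toSSF.bnd f ≤ u → toSSF.Vm u f = 0
  bnd_VmInv : ∀ (f : A) (u : ℕ), toSSF.bnd f ≤ u → toSSF.VmInv u f = 0

namespace SSFX

variable {A : Type*} [Ring A] [Algebra ℚ A] (X : SSFX A)

/-- the type II* Bernstein operators `C̄_n^{(ε)}`: the modes of
`C̄(z;η) = H(z) c̄(z;η) E^⊥(−z⁻¹) V₋(z) = ∑_{n,ε} z^n η^{1−ε} C̄_n^{(ε)}`,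
where `c̄(z;η) = exp(η ∂_{θ₁}) ∑_{r≥0} z^r θ_{r+1}`. -/
def Cbar (n : ℤ) (ε : ℕ) (f : A) : A :=
  ∑ u ∈ Finset.range (X.toSSF.bnd f),
    ∑ j ∈ Finset.range (X.toSSF.bnd (X.toSSF.Vm u f)),
      ((-1 : ℚ))^j •
        ∑ r ∈ Finset.range ((n + (j : ℤ) + (u : ℤ)).toNat + 1),
          X.toSSF.hZ (n + (j : ℤ) + (u : ℤ) - (r : ℤ)) *
            (if ε = 0
              then X.toSSF.Dθ 1 (X.toSSF.θ (r+1) * X.toSSF.ePerp j (X.toSSF.Vm u f))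
              else X.toSSF.θ (r+1) * X.toSSF.ePerp j (X.toSSF.Vm u f))

/-- the modes `L_n^{(ε)}` of
`L(z;η) = H(z) E^⊥(−z⁻¹;η) V₋(z)⁻¹ = ∑_{n ∈ ℤ} z^n (L_n^{(0)} + η L_n^{(1)})` -/
def Lmode (n : ℤ) (ε : ℕ) (f : A) : A :=
  ∑ u ∈ Finset.range (X.toSSF.bnd f),
    ∑ k ∈ Finset.range (X.toSSF.bnd (X.toSSF.VmInv u f)),
      (((-1 : ℚ))^k * (if ε = 0 then 1 else -1)) •
        (X.toSSF.hZ (n + (k : ℤ) + (u : ℤ)) *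
          (if ε = 0 then X.toSSF.ePerp k (X.toSSF.VmInv u f)
           else X.toSSF.etPerp k (X.toSSF.VmInv u f)))

end SSFX

/-- The combinatorial conditions on the pair `(Λ, Ω)` appearing in the
Pieri rule for `e_r s*_Λ`:  `Ω*/Λ*` is a vertical `r`-strip, the fermionic
degrees agree, and the circles move according to the rules: a circle cannot
overpass another one (circles move only downwards, the `j`-th circle of `Λ`
becoming the `j`-th circle of `Ω`); a circle cannot end up in a row with an
added box; a circle moves only when a (bosonic) box is added to its row, in
which case it is bumped (repeatedly) to the end of the first subsequent row
having no added box.  (In particular `Ω⊛/Λ⊛` is also a vertical strip.) -/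
def SuperPartition.EPieriRule (r : ℕ) (Λ Ω : SuperPartition) : Prop :=
  Ω.fdeg = Λ.fdeg ∧
  (∀ i, Λ.starPart i ≤ Ω.starPart i ∧ Ω.starPart i ≤ Λ.starPart i + 1) ∧
  Ω.star.sum = Λ.star.sum + r ∧
  (∀ i, Λ.circPart i ≤ Ω.circPart i ∧ Ω.circPart i ≤ Λ.circPart i + 1) ∧
  (∀ i, Ω.circPart i = Ω.starPart i + 1 → Ω.starPart i = Λ.starPart i) ∧
  (∀ j, j < Λ.fdeg → Λ.circleRows.getD j 0 ≤ Ω.circleRows.getD j 0) ∧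
  (∀ j, j < Λ.fdeg →
    Ω.starPart (Λ.circleRows.getD j 0) = Λ.starPart (Λ.circleRows.getD j 0) →
    Ω.circleRows.getD j 0 = Λ.circleRows.getD j 0) ∧
  (∀ j, j < Λ.fdeg → ∀ i, Λ.circleRows.getD j 0 < i → i < Ω.circleRows.getD j 0 →
    Ω.starPart i = Λ.starPart i + 1)

/-!
Since `h_k` is central, the adjoint of Newton's recurrence, `m h_m^⊥ = ∑_k h_{m-k}^⊥ ∂_{x_k}`,
together with `∂_{x_k} h_a = h_{a-k}` gives by induction on `m` the commutation rule
`h_m^⊥ ∘ h_a = ∑_{i+j=m} h_{a-i} ∘ h_j^⊥`. Substituting it into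
`∂_{ẽ₀}^⊥ C_n^{(0)} = ∑_s θ_{s+1} h_s^⊥ C_n^{(0)}` and moving `h_{n+r-t}` past `θ_{s+1}` gives
the triple sum; the truncation bounds only have to cover the finitely many non-zero terms.
-/

namespace Finset.Nat

theorem sum_antidiagonal_antidiagonal_assoc {M : Type*} [AddCommMonoid M] (n : ℕ)
    (G : ℕ → ℕ → ℕ → M) :
    ∑ p ∈ antidiagonal n, ∑ q ∈ antidiagonal p.2, G p.1 q.1 q.2
      = ∑ p ∈ antidiagonal n, ∑ q ∈ antidiagonal p.1, G q.1 q.2 p.2 := by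
  simp only [Finset.sum_sigma']
  apply Finset.sum_nbij' (fun x ↦ ⟨(x.1.1 + x.2.1, x.2.2), (x.1.1, x.2.1)⟩)
    (fun x ↦ ⟨(x.2.1, x.2.2 + x.1.2), (x.2.2, x.1.2)⟩) <;> aesop (add simp [add_assoc])

theorem sum_antidiagonal_antidiagonal_left_comm {M : Type*} [AddCommMonoid M] (n : ℕ)
    (G : ℕ → ℕ → ℕ → M) :
    ∑ p ∈ antidiagonal n, ∑ q ∈ antidiagonal p.2, G p.1 q.1 q.2
      = ∑ p ∈ antidiagonal n, ∑ q ∈ antidiagonal p.2, G q.1 p.1 q.2 := by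
  simp only [Finset.sum_sigma']
  apply Finset.sum_nbij' (fun x ↦ ⟨(x.2.1, x.1.1 + x.2.2), (x.1.1, x.2.2)⟩)
    (fun x ↦ ⟨(x.2.1, x.1.1 + x.2.2), (x.1.1, x.2.2)⟩) <;>
    aesop (add simp [add_assoc, add_left_comm])

theorem succ_nsmul_sum_antidiagonal_succ {M : Type*} [AddCommMonoid M] (n : ℕ)
    (F : ℕ → ℕ → M) :
    (n + 1) • ∑ p ∈ antidiagonal (n + 1), F p.1 p.2
      = ∑ p ∈ antidiagonal n, (p.1 + 1) • F (p.1 + 1) p.2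
        + ∑ p ∈ antidiagonal n, (p.2 + 1) • F p.1 (p.2 + 1) := by
  have h : ∀ p ∈ antidiagonal (n + 1),
      (n + 1) • F p.1 p.2 = p.1 • F p.1 p.2 + p.2 • F p.1 p.2 := by
    intro p hp
    rw [HasAntidiagonal.mem_antidiagonal] at hp
    rw [← add_nsmul, hp]
  rw [Finset.smul_sum, Finset.sum_congr rfl h, Finset.sum_add_distrib, sum_antidiagonal_succ,
    sum_antidiagonal_succ']
  simp

theorem sum_range_sum_antidiagonal_of_support {M : Type*} [AddCommMonoid M] (F : ℕ → ℕ → M)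
    {I J N : ℕ} (hI : ∀ i j, I ≤ i → F i j = 0) (hJ : ∀ i j, J ≤ j → F i j = 0)
    (hN : I + J ≤ N) :
    ∑ s ∈ range N, ∑ p ∈ antidiagonal s, F p.1 p.2
      = ∑ i ∈ range I, ∑ j ∈ range J, F i j := by
  simp only [sum_antidiagonal_eq_sum_range_succ F, sum_range_diag_flip N F]
  rw [eventually_constant_sum (N := I) (fun i hi ↦ sum_eq_zero fun j _ ↦ hI i j hi) (by omega)]
  refine sum_congr rfl fun i hi ↦ ?_
  rw [mem_range] at hi
  exact eventually_constant_sum (fun j hj ↦ hJ i j hj) (by omega)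

end Finset.Nat

namespace SSF

variable {A : Type*} [Ring A] [Algebra ℚ A] (S : SSF A)

open Finset

theorem h_mem_center (n : ℕ) : S.h n ∈ Subalgebra.center ℚ A := by
  induction n using Nat.strong_induction_on with
  | _ n ih =>
    rcases n with _ | m
    · exact S.h_zero ▸ Subalgebra.one_mem _
    · have hx : ∀ k, S.x k ∈ Subalgebra.center ℚ A := fun k ↦
        Subalgebra.mem_center_iff.mpr fun a ↦ (S.x_central k a).symm
      rw [(eq_inv_smul_iff₀ (by positivity)).mpr (S.h_rec m)]
      exact Subalgebra.smul_mem _ (Subalgebra.sum_mem _ fun k _ ↦ Subalgebra.smul_mem _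
        (Subalgebra.mul_mem _ (hx _) (ih _ (by omega))) _) _

theorem hZ_commute (a : ℤ) (b : A) : Commute (S.hZ a) b := by
  unfold hZ
  split_ifs
  · exact ((Subalgebra.mem_center_iff.mp (S.h_mem_center _)) b).symm
  · exact Commute.zero_left b

theorem hZ_of_neg {a : ℤ} (ha : a < 0) : S.hZ a = 0 := if_neg (by omega)

theorem hZ_natCast (n : ℕ) : S.hZ n = S.h n := by
  simp [hZ]

theorem Dx_one (k : ℕ) : S.Dx k 1 = 0 := by
  simpa using S.Dx_leibniz k 1 1

theorem hZ_rec {a : ℤ} {N : ℕ} (haN : a < N) :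
    ((a : ℚ) + 1) • S.hZ (a + 1)
      = ∑ j ∈ range N, ((j : ℚ) + 1) • (S.x (j + 1) * S.hZ (a - j)) := by
  rcases lt_or_ge a 0 with ha | ha
  · rw [sum_eq_zero fun j _ ↦ by rw [S.hZ_of_neg (by omega), mul_zero, smul_zero]]
    rcases eq_or_lt_of_le (show a + 1 ≤ 0 by omega) with ha1 | ha1
    · rw [show (a : ℚ) + 1 = 0 by exact_mod_cast ha1, zero_smul]
    · rw [S.hZ_of_neg ha1, smul_zero]
  · lift a to ℕ using ha
    rw [eventually_constant_sum (N := a + 1) (fun j hj ↦ by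
      rw [S.hZ_of_neg (by omega), mul_zero, smul_zero]) (by omega)]
    push_cast
    rw [show ((a : ℤ) + 1) = ((a + 1 : ℕ) : ℤ) by push_cast; ring, hZ_natCast, S.h_rec]
    refine sum_congr rfl fun j hj ↦ ?_
    rw [mem_range] at hj
    rw [show (a : ℤ) - j = ((a - j : ℕ) : ℤ) by omega, hZ_natCast]

theorem Dx_hZ {k : ℕ} (hk : 1 ≤ k) (a : ℤ) : S.Dx k (S.hZ a) = S.hZ (a - k) := by
  obtain ⟨n, hn⟩ : ∃ n : ℕ, a < n := ⟨a.toNat + 1, by omega⟩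
  induction n generalizing a with
  | zero => rw [S.hZ_of_neg (by omega), S.hZ_of_neg (by omega), map_zero]
  | succ n ih =>
    rcases lt_trichotomy a 0 with ha | rfl | ha
    · rw [S.hZ_of_neg ha, S.hZ_of_neg (by omega), map_zero]
    · rw [show (0 : ℤ) = (0 : ℕ) from rfl, hZ_natCast, S.h_zero, Dx_one,
        S.hZ_of_neg (by omega)]
    obtain ⟨b, rfl⟩ : ∃ b : ℤ, a = b + 1 := ⟨a - 1, by ring⟩
    have hrec := S.hZ_rec (a := b) (N := n + k) (by omega)
    have hD : ∀ j ∈ range (n + k), S.Dx k (((j : ℚ) + 1) • (S.x (j + 1) * S.hZ (b - j)))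
        = ((j : ℚ) + 1) • ((if j + 1 = k then 1 else 0) * S.hZ (b - j))
          + ((j : ℚ) + 1) • (S.x (j + 1) * S.hZ (b - k - j)) := by
      intro j _
      rw [map_smul, S.Dx_leibniz, S.Dx_x k _ hk, ih _ (by omega), smul_add, sub_right_comm]
    have hfirst :
        ∑ j ∈ range (n + k), ((j : ℚ) + 1) • ((if j + 1 = k then 1 else 0) * S.hZ (b - j))
        = (k : ℚ) • S.hZ (b + 1 - k) := by
      rw [sum_eq_single_of_mem (k - 1) (by rw [mem_range]; omega)
        fun j _ hj ↦ by rw [if_neg (by omega), zero_mul, smul_zero]]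
      rw [if_pos (by omega), one_mul, Nat.cast_sub hk, Nat.cast_sub hk]
      congr 2 <;> push_cast <;> ring
    apply smul_right_injective A (show (b : ℚ) + 1 ≠ 0 by
      exact_mod_cast (show b + 1 ≠ 0 by omega))
    dsimp only
    rw [← map_smul, hrec, map_sum, sum_congr rfl hD, sum_add_distrib, hfirst,
      ← S.hZ_rec (by omega), sub_add_eq_add_sub, ← add_smul]
    congr 1
    push_cast
    ring

theorem Dx_hZ_mul {k : ℕ} (hk : 1 ≤ k) (a : ℤ) (g : A) :
    S.Dx k (S.hZ a * g) = S.hZ (a - k) * g + S.hZ a * S.Dx k g := by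
  rw [S.Dx_leibniz, S.Dx_hZ hk]

theorem succ_nsmul_perp_h_succ (m : ℕ) (g : A) :
    (m + 1) • S.perp (S.h (m + 1)) g
      = ∑ p ∈ antidiagonal m, S.perp (S.h p.2) (S.Dx (p.1 + 1) g) := by
  have hterm : ∀ k ∈ range (m + 1),
      S.perp (((k : ℚ) + 1) • (S.x (k + 1) * S.h (m - k)))
        = S.perp (S.h (m - k)) * S.Dx (k + 1) := by
    intro k _
    rw [map_smul, S.perp_mul, S.perp_x _ (by omega), mul_smul_comm, smul_smul]
    rw [show ((k : ℚ) + 1) * ((k + 1 : ℕ) : ℚ)⁻¹ = 1 by push_cast; field_simp, one_smul]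
  rw [Nat.sum_antidiagonal_eq_sum_range_succ (fun i j ↦ S.perp (S.h j) (S.Dx (i + 1) g)),
    ← Nat.cast_smul_eq_nsmul ℚ, ← LinearMap.smul_apply, ← map_smul, Nat.cast_succ, S.h_rec,
    map_sum, sum_congr rfl hterm, LinearMap.sum_apply]
  rfl

theorem perp_h_hZ_mul (m : ℕ) (a : ℤ) (g : A) :
    S.perp (S.h m) (S.hZ a * g)
      = ∑ p ∈ antidiagonal m, S.hZ (a - p.1) * S.perp (S.h p.2) g := by
  induction m using Nat.strong_induction_on generalizing a g with
  | _ m ih =>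
  rcases m with _ | m
  · simp [S.h_zero, S.perp_one]
  have hle : ∀ p ∈ antidiagonal m, p.2 < m + 1 := fun p hp ↦ by
    rw [HasAntidiagonal.mem_antidiagonal] at hp; omega
  have hleibniz : ∀ p ∈ antidiagonal m, S.perp (S.h p.2) (S.Dx (p.1 + 1) (S.hZ a * g))
      = ∑ q ∈ antidiagonal p.2, S.hZ (a - (p.1 + 1) - q.1) * S.perp (S.h q.2) g
        + ∑ q ∈ antidiagonal p.2, S.hZ (a - q.1) * S.perp (S.h q.2) (S.Dx (p.1 + 1) g) := by
    intro p hp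
    rw [S.Dx_hZ_mul (by omega), map_add, ih _ (hle p hp), ih _ (hle p hp)]
    push_cast
    rfl
  have hcount : ∀ p ∈ antidiagonal m, ∑ q ∈ antidiagonal p.1,
      S.hZ (a - (q.1 + 1) - q.2) * S.perp (S.h p.2) g
        = (p.1 + 1) • (S.hZ (a - (p.1 + 1 : ℕ)) * S.perp (S.h p.2) g) := by
    intro p _
    have hconst : ∀ q ∈ antidiagonal p.1, S.hZ (a - (q.1 + 1) - q.2) * S.perp (S.h p.2) g
        = S.hZ (a - (p.1 + 1 : ℕ)) * S.perp (S.h p.2) g := by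
      intro q hq
      rw [HasAntidiagonal.mem_antidiagonal] at hq
      rw [← hq]
      push_cast
      ring_nf
    rw [sum_congr rfl hconst, sum_const, Nat.card_antidiagonal]
  have hrec : ∀ p ∈ antidiagonal m, ∑ q ∈ antidiagonal p.2,
      S.hZ (a - p.1) * S.perp (S.h q.2) (S.Dx (q.1 + 1) g)
        = (p.2 + 1) • (S.hZ (a - p.1) * S.perp (S.h (p.2 + 1)) g) := by
    intro p _
    rw [← mul_sum, ← succ_nsmul_perp_h_succ, mul_smul_comm]
  apply smul_right_injective A (show ((m + 1 : ℕ) : ℚ) ≠ 0 by positivity)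
  dsimp only
  simp only [Nat.cast_smul_eq_nsmul]
  rw [succ_nsmul_perp_h_succ, sum_congr rfl hleibniz, sum_add_distrib,
    Nat.sum_antidiagonal_antidiagonal_assoc m
      (fun i t l ↦ S.hZ (a - (i + 1) - t) * S.perp (S.h l) g),
    Nat.sum_antidiagonal_antidiagonal_left_comm m
      (fun i t l ↦ S.hZ (a - t) * S.perp (S.h l) (S.Dx (i + 1) g)),
    sum_congr rfl hcount, sum_congr rfl hrec,
    Nat.succ_nsmul_sum_antidiagonal_succ m (fun i j ↦ S.hZ (a - i) * S.perp (S.h j) g)]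

theorem deperp_zero_eq_sum_range (g : A) {N : ℕ} (hN : S.bnd g ≤ N) :
    S.deperp 0 g = ∑ s ∈ range N, S.θ (s + 1) * S.perp (S.h s) g := by
  rw [deperp, pow_zero, one_smul, eventually_constant_sum (fun s hs ↦ by
    rw [S.bnd_hperp g s hs, mul_zero]) hN]
  simp only [zero_add]

theorem θ_mul_perp_h_C0 (s : ℕ) (n : ℤ) (f : A) :
    S.θ (s + 1) * S.perp (S.h s) (S.C0 n f) = ∑ r ∈ range (S.bnd f), (-1 : ℚ) ^ r •
      ∑ p ∈ antidiagonal s,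
        S.hZ (n + r - p.1) * (S.θ (p.2 + p.1 + 1) * S.hPerp p.2 (S.ePerp r f)) := by
  simp only [C0, map_sum, map_smul, perp_h_hZ_mul, mul_sum, mul_smul_comm]
  refine sum_congr rfl fun r _ ↦ congrArg _ (sum_congr rfl fun p hp ↦ ?_)
  rw [HasAntidiagonal.mem_antidiagonal] at hp
  rw [(S.hZ_commute _ _).left_comm, ← hp, add_comm p.1]
  rfl

theorem deperp_zero_C0 (n : ℤ) (f : A) :
    S.deperp 0 (S.C0 n f) = ∑ r ∈ range (S.bnd f), (-1 : ℚ) ^ r •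
      ∑ s ∈ range (S.bnd (S.ePerp r f)), ∑ t ∈ range ((n + r).toNat + 1),
        S.hZ (n + r - t) * (S.θ (s + t + 1) * S.hPerp s (S.ePerp r f)) := by
  set F : ℕ → ℕ → ℕ → A := fun r s t ↦
    S.hZ (n + r - t) * (S.θ (s + t + 1) * S.hPerp s (S.ePerp r f)) with hF
  set N := S.bnd (S.C0 n f) + ∑ r ∈ range (S.bnd f), (S.bnd (S.ePerp r f) + ((n + r).toNat + 1))
  calc S.deperp 0 (S.C0 n f) = ∑ s ∈ range N, S.θ (s + 1) * S.perp (S.h s) (S.C0 n f) :=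
        S.deperp_zero_eq_sum_range _ (Nat.le_add_right _ _)
    _ = ∑ r ∈ range (S.bnd f), (-1 : ℚ) ^ r •
          ∑ s ∈ range N, ∑ p ∈ antidiagonal s, F r p.2 p.1 := by
        simp only [θ_mul_perp_h_C0, smul_sum]
        exact sum_comm
    _ = _ := by
        refine sum_congr rfl fun r hr ↦ congrArg _ ?_
        rw [Nat.sum_range_sum_antidiagonal_of_support (fun t s ↦ F r s t)
          (I := (n + r).toNat + 1) (J := S.bnd (S.ePerp r f)), sum_comm]
        · intro t s ht
          simp only [hF, S.hZ_of_neg (show n + r - t < 0 by omega), zero_mul]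
        · intro t s hs
          simp only [hF, hPerp, S.bnd_hperp _ _ hs, mul_zero]
        · have := single_le_sum (f := fun r ↦ S.bnd (S.ePerp r f) + ((n + r).toNat + 1))
            (fun _ _ ↦ Nat.zero_le _) hr
          omega

end SSF

/-- For every `n ∈ ℤ`, the odd type-I* Bernstein operator
satisfies `C_n^{(1)} = ∂_{ẽ₀}^⊥ ∘ C_n^{(0)}
= ∑_{r,s,t≥0} (−1)^r h_{n+r−t} ∘ θ_{s+t+1} ∘ h_s^⊥ ∘ e_r^⊥`
(with `h_j = 0` for `j < 0`; all sums are locally finite and rendered with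
the truncation bound `bnd`). -/
theorem C1_explicit {A : Type*} [Ring A] [Algebra ℚ A]
    (S : SSF A) (n : ℤ) (f : A) :
    S.C1 n f = S.deperp 0 (S.C0 n f)
    ∧ S.C1 n f =
        ∑ r ∈ Finset.range (S.bnd f),
          ((-1 : ℚ))^r •
            ∑ s ∈ Finset.range (S.bnd (S.ePerp r f)),
              ∑ t ∈ Finset.range ((n + (r : ℤ)).toNat + 1),
                S.hZ (n + (r : ℤ) - (t : ℤ)) *
                  (S.θ (s + t + 1) * S.hPerp s (S.ePerp r f)) :=
  ⟨rfl, S.deperp_zero_C0 n f⟩
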